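/- arXiv:1806.03985 — 3 statements merged into one kernel-verified Lean document; each statement's English description precedes it below -/
import Mathlib

section
/- For a positive definite N×N complex matrix X and s > 1, one has tr X^s = sup over positive semidefinite Y of ( s·tr(XY) − (s−1)·tr Y^{s/(s−1)} ). -/
/-!
Diagonalize `A = ∑ λᵢ uᵢuᵢ*` and `B = ∑ μⱼ vⱼvⱼ*`. Then `tr (A B) = ∑ λᵢ μⱼ |⟨uᵢ, vⱼ⟩|²`, and the
weights `|⟨uᵢ, vⱼ⟩|²` (the entries of the unitary `U* V`) form a doubly stochastic matrix. So
Young's inequality `s λ μ ≤ λ^s + (s - 1) μ^(s/(s-1))`, applied term by term, bounds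
`s tr (A B) - (s - 1) tr B^(s/(s-1))` by `tr A^s`, with equality at `B = A^(s-1)`.
-/

open Matrix ComplexOrder

noncomputable def mpow {n : Type*} [Fintype n] [DecidableEq n]
    (A : Matrix n n ℂ) (p : ℝ) : Matrix n n ℂ :=
  cfc (fun x : ℝ => x ^ p) A

noncomputable def rtr {n : Type*} [Fintype n] (A : Matrix n n ℂ) : ℝ :=
  (Matrix.trace A).re

open scoped MatrixOrder

lemma Real.mul_mul_sub_mul_rpow_le_rpow {s x y : ℝ} (hs : 1 < s) (hx : 0 ≤ x) (hy : 0 ≤ y) :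
    s * (x * y) - (s - 1) * y ^ (s / (s - 1)) ≤ x ^ s := by
  have hyoung := Real.young_inequality_of_nonneg hx hy (.conjExponent hs)
  rw [Real.conjExponent] at hyoung
  field_simp at hyoung
  linarith

section

variable {n : Type*} [Fintype n] [DecidableEq n] {A B : Matrix n n ℂ}

lemma Matrix.sum_normSq_row_of_mem_unitaryGroup {W : Matrix n n ℂ} (hW : W ∈ unitaryGroup n ℂ)
    (i : n) : ∑ j, Complex.normSq (W i j) = 1 := by
  have h := congrFun₂ (mem_unitaryGroup_iff.mp hW) i i
  simp only [mul_apply, star_apply, one_apply_eq, RCLike.star_def, Complex.mul_conj] at h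
  exact_mod_cast h

lemma Matrix.map_normSq_mem_doublyStochastic {W : Matrix n n ℂ} (hW : W ∈ unitaryGroup n ℂ) :
    W.map Complex.normSq ∈ doublyStochastic ℝ n := by
  refine mem_doublyStochastic_iff_sum.mpr ⟨fun i j => Complex.normSq_nonneg _,
    sum_normSq_row_of_mem_unitaryGroup hW, fun j => ?_⟩
  simpa using sum_normSq_row_of_mem_unitaryGroup (Unitary.star_mem hW) j

lemma rtr_diagonal_mul_mul_diagonal_mul_star (W : Matrix n n ℂ) (a b : n → ℝ) :
    rtr (diagonal (RCLike.ofReal ∘ a) * W * diagonal (RCLike.ofReal ∘ b) * star W) =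
      ∑ i, ∑ j, a i * b j * Complex.normSq (W i j) := by
  rw [rtr, trace, Complex.re_sum]
  refine Finset.sum_congr rfl fun i _ => ?_
  rw [diag_apply, mul_apply, Complex.re_sum]
  refine Finset.sum_congr rfl fun j _ => ?_
  rw [mul_diagonal, diagonal_mul, star_apply, RCLike.star_def, mul_right_comm _ (W i j),
    mul_assoc, Complex.mul_conj]
  simp

lemma Matrix.IsHermitian.rtr_mpow (hA : A.IsHermitian) (p : ℝ) :
    rtr (mpow A p) = ∑ i, hA.eigenvalues i ^ p := by
  rw [mpow, hA.cfc_eq, IsHermitian.cfc, Unitary.conjStarAlgAut_apply, rtr, trace_mul_cycle,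
    Unitary.coe_star_mul_self, one_mul, trace_diagonal]
  simp

lemma Matrix.IsHermitian.rtr_mul (hA : A.IsHermitian) (hB : B.IsHermitian) :
    rtr (A * B) = ∑ i, ∑ j, hA.eigenvalues i * hB.eigenvalues j *
      Complex.normSq
        ((star (hA.eigenvectorUnitary : Matrix n n ℂ) * hB.eigenvectorUnitary) i j) := by
  rw [← rtr_diagonal_mul_mul_diagonal_mul_star]
  conv_lhs => rw [hA.spectral_theorem, hB.spectral_theorem]
  simp only [Unitary.conjStarAlgAut_apply, rtr, star_mul, star_star, mul_assoc]
  rw [trace_mul_comm]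
  simp only [mul_assoc]

lemma Matrix.mul_sum_sub_le_sum_rpow_of_mem_doublyStochastic {M : Matrix n n ℝ}
    (hM : M ∈ doublyStochastic ℝ n) {a b : n → ℝ} (ha : ∀ i, 0 ≤ a i) (hb : ∀ j, 0 ≤ b j)
    {s : ℝ} (hs : 1 < s) :
    s * ∑ i, ∑ j, a i * b j * M i j - (s - 1) * ∑ j, b j ^ (s / (s - 1)) ≤ ∑ i, a i ^ s := by
  have hrow : ∑ i, a i ^ s = ∑ i, ∑ j, M i j * a i ^ s := by
    simp only [← Finset.sum_mul, sum_row_of_mem_doublyStochastic hM, one_mul]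
  have hcol : ∑ j, b j ^ (s / (s - 1)) = ∑ i, ∑ j, M i j * b j ^ (s / (s - 1)) := by
    rw [Finset.sum_comm]
    simp only [← Finset.sum_mul, sum_col_of_mem_doublyStochastic hM, one_mul]
  rw [hrow, hcol, Finset.mul_sum, Finset.mul_sum, ← Finset.sum_sub_distrib]
  refine Finset.sum_le_sum fun i _ => ?_
  rw [Finset.mul_sum, Finset.mul_sum, ← Finset.sum_sub_distrib]
  refine Finset.sum_le_sum fun j _ => ?_
  calc _ = M i j * (s * (a i * b j) - (s - 1) * b j ^ (s / (s - 1))) := by ring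
    _ ≤ M i j * a i ^ s := by
      gcongr
      · exact nonneg_of_mem_doublyStochastic hM
      · exact Real.mul_mul_sub_mul_rpow_le_rpow hs (ha i) (hb j)

lemma Matrix.PosSemidef.mul_rtr_mul_sub_le_rtr_mpow (hA : A.PosSemidef) (hB : B.PosSemidef)
    {s : ℝ} (hs : 1 < s) :
    s * rtr (A * B) - (s - 1) * rtr (mpow B (s / (s - 1))) ≤ rtr (mpow A s) := by
  rw [hA.1.rtr_mul hB.1, hA.1.rtr_mpow, hB.1.rtr_mpow]
  exact mul_sum_sub_le_sum_rpow_of_mem_doublyStochastic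
    (map_normSq_mem_doublyStochastic (Submonoid.mul_mem _ (Unitary.star_mem (SetLike.coe_mem _))
      (SetLike.coe_mem _))) hA.eigenvalues_nonneg hB.eigenvalues_nonneg hs

lemma Matrix.PosSemidef.posSemidef_mpow (hA : A.PosSemidef) (p : ℝ) : (mpow A p).PosSemidef :=
  (cfc_nonneg fun _ hx => Real.rpow_nonneg (spectrum_nonneg_of_nonneg hA.nonneg hx) p).posSemidef

lemma Matrix.PosSemidef.mul_mpow_sub_one (hA : A.PosSemidef) {p : ℝ} (hp : p ≠ 0) :
    A * mpow A (p - 1) = mpow A p := by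
  have hpow : mpow A p = cfc (fun x : ℝ => x * x ^ (p - 1)) A := cfc_congr fun x hx => by
    rw [← Real.rpow_one_add' (spectrum_nonneg_of_nonneg hA.nonneg hx) (by simpa using hp),
      add_sub_cancel]
  rw [hpow, cfc_mul _ _ _ (finite_real_spectrum.continuousOn _)
    (finite_real_spectrum.continuousOn _), cfc_id' ℝ A hA.1.isSelfAdjoint, mpow]

lemma Matrix.PosSemidef.mpow_mpow (hA : A.PosSemidef) (p q : ℝ) :
    mpow (mpow A p) q = mpow A (p * q) := by
  rw [mpow, mpow, mpow, ← cfc_comp' _ _ _ ((finite_real_spectrum.image _).continuousOn _)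
    (finite_real_spectrum.continuousOn _) hA.1.isSelfAdjoint]
  exact cfc_congr fun x hx => (Real.rpow_mul (spectrum_nonneg_of_nonneg hA.nonneg hx) p q).symm

end

theorem trace_pow_variational_sup {N : ℕ} (X : Matrix (Fin N) (Fin N) ℂ)
    (hX : X.PosDef) (s : ℝ) (hs : 1 < s) :
    rtr (mpow X s) =
      sSup { r : ℝ | ∃ Y : Matrix (Fin N) (Fin N) ℂ, Y.PosSemidef ∧
        r = s * rtr (X * Y) - (s - 1) * rtr (mpow Y (s / (s - 1))) } := by
  have hs1 : s - 1 ≠ 0 := by linarith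
  refine (IsGreatest.csSup_eq ⟨?_, ?_⟩).symm
  · refine ⟨mpow X (s - 1), hX.posSemidef.posSemidef_mpow _, ?_⟩
    rw [hX.posSemidef.mul_mpow_sub_one (by linarith), hX.posSemidef.mpow_mpow,
      mul_div_cancel₀ _ hs1]
    ring
  · rintro _ ⟨Y, hY, rfl⟩
    exact hX.posSemidef.mul_rtr_mul_sub_le_rtr_mpow hY hs
end

section
/- For any −1 ≤ q ≤ 0 and any K ∈ M_N(ℂ), the map (A,B) ↦ A K B^q K* A is jointly convex on pairs of positive definite N×N matrices, with respect to the Loewner order. -/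
open Matrix ComplexOrder

/-!
With `p = -q ∈ [0, 1]` and `X = Kᴴ A`, the map is `(X, B) ↦ Xᴴ (B ^ p)⁻¹ X`. Operator concavity
of `B ↦ B ^ p` gives `(1 - θ) B₀ ^ p + θ B₁ ^ p ≤ B_θ ^ p`, and since inversion is operator
antitone we may replace `(B_θ ^ p)⁻¹` by the inverse of that convex combination. What remains is
the joint convexity of `(X, M) ↦ Xᴴ M⁻¹ X` on positive definite `M`, which follows from the Schur
complement criterion applied to convex combinations of the positive semidefinite block matrices
`[M, X; Xᴴ, Xᴴ M⁻¹ X]`.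
-/

-- `Matrix.Norms.L2Operator` provides the C⋆-algebra structure on `Matrix n n ℂ`.
open scoped MatrixOrder Matrix.Norms.L2Operator

namespace Matrix

variable {𝕜 m n : Type*} [RCLike 𝕜]

lemma convex_setOf_posDef : Convex ℝ {M : Matrix m m 𝕜 | M.PosDef} := by
  intro M₀ hM₀ M₁ hM₁ a b ha hb hab
  rcases ha.eq_or_lt with rfl | ha
  · rw [zero_add] at hab
    simpa [hab] using hM₁
  · exact (hM₀.smul ha).add_posSemidef (hM₁.posSemidef.smul hb)

lemma IsHermitian.mul_mul_mul_conjTranspose_mul {α : Type*} [CommSemiring α] [StarRing α]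
    [Fintype m] [Fintype n] {A : Matrix m m α} (hA : A.IsHermitian) (K : Matrix m n α)
    (M : Matrix n n α) :
    A * K * M * Kᴴ * A = (Kᴴ * A)ᴴ * M * (Kᴴ * A) := by
  rw [conjTranspose_mul, conjTranspose_conjTranspose, hA.eq]
  simp only [Matrix.mul_assoc]

variable [Fintype m] [DecidableEq m]

lemma convexOn_conjTranspose_mul_inv_mul [Fintype n] :
    ConvexOn ℝ (Set.univ ×ˢ {M : Matrix m m 𝕜 | M.PosDef})
      fun XM : Matrix m n 𝕜 × Matrix m m 𝕜 => XM.1ᴴ * XM.2⁻¹ * XM.1 := by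
  refine ⟨convex_univ.prod convex_setOf_posDef, ?_⟩
  rintro ⟨X₀, M₀⟩ ⟨-, hM₀ : M₀.PosDef⟩ ⟨X₁, M₁⟩ ⟨-, hM₁ : M₁.PosDef⟩ a b ha hb hab
  have hM : (a • M₀ + b • M₁).PosDef := convex_setOf_posDef hM₀ hM₁ ha hb hab
  have := hM₀.isUnit.invertible
  have := hM₁.isUnit.invertible
  have := hM.isUnit.invertible
  have hblock : ∀ (X : Matrix m n 𝕜) (M : Matrix m m 𝕜) [Invertible M], M.PosDef →
      (fromBlocks M X Xᴴ (Xᴴ * M⁻¹ * X)).PosSemidef := fun X M _ hM =>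
    (PosDef.fromBlocks₁₁ _ _ hM).mpr (by simpa using PosSemidef.zero)
  have hsum := ((hblock X₀ M₀ hM₀).smul ha).add ((hblock X₁ M₁ hM₁).smul hb)
  have hadj : (a • X₀ + b • X₁)ᴴ = a • X₀ᴴ + b • X₁ᴴ := by simp
  rw [fromBlocks_smul, fromBlocks_smul, fromBlocks_add, ← hadj] at hsum
  exact (PosDef.fromBlocks₁₁ _ _ hM).mp hsum

lemma PosDef.inv_le_inv_of_le {A B : Matrix m m ℂ} (hA : A.PosDef) (hAB : A ≤ B) :
    B⁻¹ ≤ A⁻¹ := by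
  simpa only [nonsing_inv_eq_ringInverse] using
    CStarAlgebra.ringInverse_le_ringInverse hAB hA.isStrictlyPositive

end Matrix

lemma mpow_eq_inv_rpow_neg {n : Type*} [Fintype n] [DecidableEq n] {B : Matrix n n ℂ}
    (hB : B.PosDef) (q : ℝ) : mpow B q = (B ^ (-q))⁻¹ :=
  calc mpow B q = B ^ q := (CFC.rpow_eq_cfc_real hB.posSemidef.nonneg).symm
    _ = (B ^ (-q))⁻¹ :=
      (inv_eq_left_inv (CFC.rpow_mul_rpow_neg q hB.isStrictlyPositive)).symm

theorem jointly_operator_convex_AKBqKA {N : ℕ} (q : ℝ) (hq1 : -1 ≤ q) (hq0 : q ≤ 0)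
    (K : Matrix (Fin N) (Fin N) ℂ)
    (A₀ A₁ B₀ B₁ : Matrix (Fin N) (Fin N) ℂ)
    (hA₀ : A₀.PosDef) (hA₁ : A₁.PosDef) (hB₀ : B₀.PosDef) (hB₁ : B₁.PosDef)
    (θ : ℝ) (hθ : θ ∈ Set.Icc (0:ℝ) 1) :
    ((1 - θ) • (A₀ * K * mpow B₀ q * Kᴴ * A₀) + θ • (A₁ * K * mpow B₁ q * Kᴴ * A₁)
      - (((1 - θ) • A₀ + θ • A₁) * K * mpow ((1 - θ) • B₀ + θ • B₁) q * Kᴴ *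
          ((1 - θ) • A₀ + θ • A₁))).PosSemidef := by
  obtain ⟨hθ₀, hθ₁⟩ := hθ
  have hθ' : 0 ≤ 1 - θ := sub_nonneg.mpr hθ₁
  have hAθ : ((1 - θ) • A₀ + θ • A₁).IsHermitian :=
    (convex_setOf_posDef hA₀ hA₁ hθ' hθ₀ (by ring)).isHermitian
  have hBθ : ((1 - θ) • B₀ + θ • B₁).PosDef := convex_setOf_posDef hB₀ hB₁ hθ' hθ₀ (by ring)
  have hpow : ∀ {B : Matrix (Fin N) (Fin N) ℂ}, B.PosDef → (B ^ (-q)).PosDef := fun hB =>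
    (IsStrictlyPositive.rpow _ (-q) hB.isStrictlyPositive).posDef
  have hconc : (1 - θ) • B₀ ^ (-q) + θ • B₁ ^ (-q) ≤ ((1 - θ) • B₀ + θ • B₁) ^ (-q) :=
    (CFC.concaveOn_rpow ⟨by linarith, by linarith⟩).2 hB₀.posSemidef.nonneg
      hB₁.posSemidef.nonneg hθ' hθ₀ (by ring)
  have hinv :=
    (convex_setOf_posDef (hpow hB₀) (hpow hB₁) hθ' hθ₀ (by ring)).inv_le_inv_of_le hconc
  have hjoint := convexOn_conjTranspose_mul_inv_mul.2 (x := (Kᴴ * A₀, B₀ ^ (-q)))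
    (y := (Kᴴ * A₁, B₁ ^ (-q))) ⟨trivial, hpow hB₀⟩ ⟨trivial, hpow hB₁⟩ hθ' hθ₀ (by ring)
  have hXθ : Kᴴ * ((1 - θ) • A₀ + θ • A₁) = (1 - θ) • (Kᴴ * A₀) + θ • (Kᴴ * A₁) := by
    rw [Matrix.mul_add, Matrix.mul_smul, Matrix.mul_smul]
  rw [← le_iff, mpow_eq_inv_rpow_neg hB₀, mpow_eq_inv_rpow_neg hB₁, mpow_eq_inv_rpow_neg hBθ,
    hA₀.isHermitian.mul_mul_mul_conjTranspose_mul, hA₁.isHermitian.mul_mul_mul_conjTranspose_mul,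
    hAθ.mul_mul_mul_conjTranspose_mul, hXθ]
  calc _ ≤ ((1 - θ) • (Kᴴ * A₀) + θ • (Kᴴ * A₁))ᴴ * ((1 - θ) • B₀ ^ (-q) + θ • B₁ ^ (-q))⁻¹
        * ((1 - θ) • (Kᴴ * A₀) + θ • (Kᴴ * A₁)) := star_left_conjugate_le_conjugate hinv _
    _ ≤ _ := hjoint
end

section
/- Suppose for some p ≠ 0 and s > 0 the map A ↦ tr( K* A^p K )^s is concave on 2×2 positive definite matrices for every invertible K ∈ M_2(ℂ). Then 0 < p ≤ 1. -/
open Matrix ComplexOrder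

noncomputable def Ups {N : ℕ} (K : Matrix (Fin N) (Fin N) ℂ) (p s : ℝ)
    (A : Matrix (Fin N) (Fin N) ℂ) : ℝ :=
  rtr (mpow (Kᴴ * mpow A p * K) s)

/-!
For `p < 0` or `p > 1` the function `x ↦ x ^ p` is strictly midpoint convex. Take
`A± = !![2, ±1; ±1, 2]`, with eigenvalues `3, 1` and midpoint `2 • 1`; the `(0, 0)` entry
of `A±^p` is `m = (3^p + 1) / 2 > 2^p`. For `K = diag(1, δ)` the matrix `Kᴴ A±^p K` still
has `(0, 0)` entry `m`, and a diagonal entry of a positive semidefinite matrix is at most its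
largest eigenvalue, so `tr((Kᴴ A±^p K)^s) ≥ m^s`. At the midpoint,
`tr((Kᴴ (2 • 1)^p K)^s) = 2^(ps) (1 + δ^(2s))`, which is below `m^s` for small `δ`,
contradicting concavity.
-/

open scoped MatrixOrder

section TwoPoint

variable {A : Type*} [Ring A] [StarRing A] [Algebra ℝ A] [TopologicalSpace A]
  [ContinuousFunctionalCalculus ℝ A IsSelfAdjoint]

lemma cfc_eq_of_spectrum_subset_pair {a : A} (ha : IsSelfAdjoint a) {x y : ℝ} (hxy : x ≠ y)
    (hspec : spectrum ℝ a ⊆ {x, y}) (f : ℝ → ℝ) :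
    cfc f a = algebraMap ℝ A ((y * f x - x * f y) / (y - x)) + ((f y - f x) / (y - x)) • a := by
  have hlin :
      cfc f a = cfc (fun z => (y * f x - x * f y) / (y - x) + (f y - f x) / (y - x) * z) a :=
    cfc_congr fun z hz => by rcases hspec hz with rfl | rfl <;> field_simp <;> ring
  rw [hlin, cfc_add .., cfc_const .., cfc_const_mul .., cfc_id' ℝ a]

end TwoPoint

namespace Matrix

variable {n : Type*} [Fintype n] [DecidableEq n]

lemma mpow_algebraMap (c p : ℝ) :
    mpow (algebraMap ℝ (Matrix n n ℂ) c) p = algebraMap ℝ _ (c ^ p) :=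
  cfc_algebraMap c _

lemma posSemidef_mpow {A : Matrix n n ℂ} (hA : A.PosSemidef) (p : ℝ) :
    (mpow A p).PosSemidef := by
  rw [← nonneg_iff_posSemidef] at hA ⊢
  exact cfc_nonneg fun x hx => Real.rpow_nonneg (spectrum_nonneg_of_nonneg hA hx) p

lemma IsHermitian.trace_cfc {A : Matrix n n ℂ} (hA : A.IsHermitian) (f : ℝ → ℝ) :
    (cfc f A).trace = ∑ i, (f (hA.eigenvalues i) : ℂ) := by
  rw [hA.cfc_eq, IsHermitian.cfc, Unitary.conjStarAlgAut_apply, trace_mul_cycle,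
    Unitary.coe_star_mul_self, one_mul, trace_diagonal]
  rfl

lemma IsHermitian.re_apply_le_of_spectrum_le {A : Matrix n n ℂ} (hA : A.IsHermitian) {r : ℝ}
    (h : ∀ x ∈ spectrum ℝ A, x ≤ r) (i : n) : (A i i).re ≤ r := by
  have hle : A ≤ algebraMap ℝ _ r := le_algebraMap_of_spectrum_le h (ha := hA.isSelfAdjoint)
  have := (Matrix.le_iff.mp hle).diag_nonneg (i := i)
  rw [Complex.nonneg_iff] at this
  simpa [algebraMap_eq_diagonal, sub_apply, diagonal_apply_eq] using this.1

lemma PosSemidef.rpow_re_apply_le_rtr_mpow {M : Matrix n n ℂ} (hM : M.PosSemidef) {s : ℝ}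
    (hs : 0 ≤ s) (i : n) : (M i i).re ^ s ≤ rtr (mpow M s) := by
  have hH := hM.isHermitian
  obtain ⟨j, -, hj⟩ :=
    Finset.exists_max_image Finset.univ hH.eigenvalues ⟨i, Finset.mem_univ i⟩
  have hdiag : (M i i).re ≤ hH.eigenvalues j := by
    refine hH.re_apply_le_of_spectrum_le (fun x hx => ?_) i
    rw [hH.spectrum_real_eq_range_eigenvalues] at hx
    obtain ⟨k, rfl⟩ := hx
    exact hj k (Finset.mem_univ k)
  have htr : rtr (mpow M s) = ∑ k, hH.eigenvalues k ^ s := by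
    simp [rtr, mpow, hH.trace_cfc]
  calc (M i i).re ^ s ≤ hH.eigenvalues j ^ s :=
        Real.rpow_le_rpow (by simpa using (Complex.nonneg_iff.mp hM.diag_nonneg).1) hdiag hs
    _ ≤ ∑ k, hH.eigenvalues k ^ s :=
        Finset.single_le_sum (fun k _ => Real.rpow_nonneg (hM.eigenvalues_nonneg k) s)
          (Finset.mem_univ j)
    _ = rtr (mpow M s) := htr.symm

lemma spectrum_subset_pair_of_det {A : Matrix n n ℂ} {x y : ℝ}
    (hdet : ∀ z : ℝ, det (algebraMap ℝ (Matrix n n ℂ) z - A) = (z - x) * (z - y)) :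
    spectrum ℝ A ⊆ {x, y} := by
  intro z hz
  rw [spectrum.mem_iff, isUnit_iff_isUnit_det, isUnit_iff_ne_zero, not_not, hdet z,
    mul_eq_zero, sub_eq_zero, sub_eq_zero] at hz
  exact_mod_cast hz

lemma spectrum_symm_fin_two_subset (a b : ℝ) :
    spectrum ℝ !![(a : ℂ), b; b, a] ⊆ {a + b, a - b} :=
  spectrum_subset_pair_of_det fun z => by
    simp [det_fin_two, algebraMap_eq_diagonal]
    ring

lemma spectrum_diag_fin_two_subset (u v : ℝ) :
    spectrum ℝ !![(u : ℂ), 0; 0, v] ⊆ {u, v} :=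
  spectrum_subset_pair_of_det fun z => by
    simp [det_fin_two, algebraMap_eq_diagonal]

lemma isHermitian_symm_fin_two (a b : ℝ) : (!![(a : ℂ), b; b, a]).IsHermitian := by
  ext i j; fin_cases i <;> fin_cases j <;> simp

lemma isHermitian_diag_fin_two (u v : ℝ) : (!![(u : ℂ), 0; 0, v]).IsHermitian := by
  ext i j; fin_cases i <;> fin_cases j <;> simp

lemma posDef_symm_fin_two {a b : ℝ} (hab : |b| < a) : (!![(a : ℂ), b; b, a]).PosDef := by
  have hH := isHermitian_symm_fin_two a b
  refine hH.posDef_iff_eigenvalues_pos.2 fun i => ?_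
  rcases spectrum_symm_fin_two_subset a b (hH.eigenvalues_mem_spectrum_real i) with h | h <;>
    rw [h] <;> linarith [abs_lt.1 hab]

lemma mpow_symm_fin_two_apply_zero_zero (a : ℝ) {b : ℝ} (hb : b ≠ 0) (p : ℝ) :
    mpow !![(a : ℂ), b; b, a] p 0 0 = (((a + b) ^ p + (a - b) ^ p) / 2 : ℝ) := by
  rw [mpow, cfc_eq_of_spectrum_subset_pair (isHermitian_symm_fin_two a b).isSelfAdjoint
    (by contrapose! hb; linarith) (spectrum_symm_fin_two_subset a b)]
  have hden : a - b - (a + b) ≠ 0 := by contrapose! hb; linarith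
  simp only [add_apply, smul_apply, algebraMap_eq_diagonal, diagonal_apply_eq, Pi.algebraMap_apply,
    of_apply, cons_val', cons_val_zero, empty_val', cons_val_fin_one, Complex.real_smul,
    Complex.coe_algebraMap]
  norm_cast
  field_simp
  ring

lemma rtr_mpow_diag_fin_two (u v r : ℝ) :
    rtr (mpow !![(u : ℂ), 0; 0, v] r) = u ^ r + v ^ r := by
  rcases eq_or_ne u v with rfl | huv
  · have hscalar : !![(u : ℂ), 0; 0, u] = algebraMap ℝ _ u := by
      ext i j; fin_cases i <;> fin_cases j <;> simp [algebraMap_eq_diagonal]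
    rw [hscalar, mpow, cfc_algebraMap]
    simp only [rtr, algebraMap_eq_diagonal, trace_diagonal, Pi.algebraMap_apply,
      Complex.coe_algebraMap, Fin.sum_univ_two, Complex.add_re, Complex.ofReal_re]
  · rw [mpow, cfc_eq_of_spectrum_subset_pair (isHermitian_diag_fin_two u v).isSelfAdjoint huv
      (spectrum_diag_fin_two_subset u v), rtr]
    simp only [trace_fin_two, add_apply, smul_apply, algebraMap_eq_diagonal, diagonal_apply_eq,
      Pi.algebraMap_apply, of_apply, cons_val', cons_val_zero, cons_val_one, empty_val',
      cons_val_fin_one, Complex.real_smul, Complex.coe_algebraMap]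
    norm_cast
    field_simp
    ring

end Matrix

lemma Real.rpow_midpoint_lt {p x y : ℝ} (hp : p < 0 ∨ 1 < p) (hx : 0 < x) (hy : 0 < y)
    (hxy : x ≠ y) : ((x + y) / 2) ^ p < (x ^ p + y ^ p) / 2 := by
  rcases hp with hp | hp
  · set m := (x + y) / 2
    have hm : 0 < m := by positivity
    have hxym : x * y < m * m := by
      have hsq : m * m - x * y = (x - y) ^ 2 / 4 := by simp only [m]; ring
      have : 0 < (x - y) ^ 2 := by positivity
      linarith
    have hpow : (m * m) ^ p < (x * y) ^ p := Real.rpow_lt_rpow_of_neg (by positivity) hxym hp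
    rw [Real.mul_rpow hm.le hm.le, Real.mul_rpow hx.le hy.le] at hpow
    have hmp := Real.rpow_pos_of_pos hm p
    have hxp := Real.rpow_pos_of_pos hx p
    have hyp := Real.rpow_pos_of_pos hy p
    nlinarith [sq_nonneg (x ^ p - y ^ p)]
  · have := (strictConvexOn_rpow hp).2 (Set.mem_Ici.2 hx.le) (Set.mem_Ici.2 hy.le) hxy
      (by norm_num : (0 : ℝ) < 1 / 2) (by norm_num : (0 : ℝ) < 1 / 2) (by norm_num)
    simp only [smul_eq_mul] at this
    rw [show (x + y) / 2 = 1 / 2 * x + 1 / 2 * y by ring]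
    linarith

lemma rpow_re_mpow_apply_zero_zero_le_Ups {A : Matrix (Fin 2) (Fin 2) ℂ} (hA : A.PosSemidef)
    (δ p : ℝ) {s : ℝ} (hs : 0 ≤ s) :
    (mpow A p 0 0).re ^ s ≤ Ups !![1, 0; 0, (δ : ℂ)] p s A := by
  have hconj := (Matrix.posSemidef_mpow hA p).conjTranspose_mul_mul_same !![1, 0; 0, (δ : ℂ)]
  simpa [Ups, Matrix.mul_apply, Fin.sum_univ_two] using hconj.rpow_re_apply_le_rtr_mpow hs 0

lemma Ups_diag_algebraMap (δ p s c : ℝ) :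
    Ups !![1, 0; 0, (δ : ℂ)] p s (algebraMap ℝ _ c) = (c ^ p) ^ s + (c ^ p * δ ^ 2) ^ s := by
  have hconj : !![1, 0; 0, (δ : ℂ)]ᴴ * algebraMap ℝ _ (c ^ p) * !![1, 0; 0, (δ : ℂ)] =
      !![((c ^ p : ℝ) : ℂ), 0; 0, ((c ^ p * δ ^ 2 : ℝ) : ℂ)] := by
    ext i j; fin_cases i <;> fin_cases j <;> simp [Matrix.algebraMap_eq_diagonal, Matrix.mul_apply]
    ring
  rw [Ups, mpow_algebraMap, hconj, Matrix.rtr_mpow_diag_fin_two]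

lemma exists_Ups_midpoint_lt {p s a b : ℝ} (hs : 0 < s) (hb : 0 < b) (hba : b < a)
    (hconv : a ^ p < ((a + b) ^ p + (a - b) ^ p) / 2) :
    ∃ K : Matrix (Fin 2) (Fin 2) ℂ, IsUnit K ∧ ∃ A₀ A₁ : Matrix (Fin 2) (Fin 2) ℂ,
      A₀.PosDef ∧ A₁.PosDef ∧
        Ups K p s ((1 / 2 : ℝ) • (A₀ + A₁)) < (Ups K p s A₀ + Ups K p s A₁) / 2 := by
  set m := ((a + b) ^ p + (a - b) ^ p) / 2
  have ha : 0 < a := hb.trans hba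
  have hap : 0 < a ^ p := Real.rpow_pos_of_pos ha p
  have hW : (a ^ p) ^ s < m ^ s := Real.rpow_lt_rpow hap.le hconv hs
  set g := (m ^ s - (a ^ p) ^ s) / 2
  have hg : 0 < g := by simp only [g]; linarith
  -- `δ` puts the midpoint value at `(a ^ p) ^ s + g`, halfway between `(a ^ p) ^ s` and `m ^ s`.
  set δ := √(g ^ s⁻¹ / a ^ p)
  have hδ : 0 < δ := Real.sqrt_pos.2 (by positivity)
  have hδg : (a ^ p * δ ^ 2) ^ s = g := by
    rw [Real.sq_sqrt (by positivity), mul_div_cancel₀ _ hap.ne', Real.rpow_inv_rpow hg.le hs.ne']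
  have hK : IsUnit !![1, 0; 0, (δ : ℂ)] := by
    simpa [Matrix.isUnit_iff_isUnit_det, Matrix.det_fin_two_of] using hδ.ne'
  have hend : ∀ c : ℝ, c ≠ 0 → |c| < a →
      (((a + c) ^ p + (a - c) ^ p) / 2) ^ s ≤
        Ups !![1, 0; 0, (δ : ℂ)] p s !![(a : ℂ), c; c, a] :=
    fun c hc hca => by
      simpa [Matrix.mpow_symm_fin_two_apply_zero_zero a hc] using
        rpow_re_mpow_apply_zero_zero_le_Ups (Matrix.posDef_symm_fin_two hca).posSemidef δ p hs.le
  have h₀ := hend b hb.ne' (by rwa [abs_of_pos hb])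
  have h₁ := hend (-b) (neg_ne_zero.2 hb.ne') (by rwa [abs_neg, abs_of_pos hb])
  rw [sub_neg_eq_add, ← sub_eq_add_neg, add_comm ((a - b) ^ p)] at h₁
  have hmid : (1 / 2 : ℝ) • (!![(a : ℂ), b; b, a] + !![(a : ℂ), ↑(-b); ↑(-b), a]) =
      algebraMap ℝ _ a := by
    ext i j; fin_cases i <;> fin_cases j <;> simp [Matrix.algebraMap_eq_diagonal] <;> ring
  refine ⟨_, hK, _, _, Matrix.posDef_symm_fin_two (by rwa [abs_of_pos hb]),
    Matrix.posDef_symm_fin_two (by rwa [abs_neg, abs_of_pos hb]), ?_⟩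
  change m ^ s ≤ _ at h₀ h₁
  rw [hmid, Ups_diag_algebraMap, hδg]
  simp only [g]
  linarith

theorem Ups_concave_necessary (p s : ℝ) (hp : p ≠ 0) (hs : 0 < s)
    (hconc : ∀ K : Matrix (Fin 2) (Fin 2) ℂ, IsUnit K →
      ∀ A₀ A₁ : Matrix (Fin 2) (Fin 2) ℂ, A₀.PosDef → A₁.PosDef →
      ∀ θ : ℝ, θ ∈ Set.Icc (0:ℝ) 1 →
        (1 - θ) * Ups K p s A₀ + θ * Ups K p s A₁ ≤
          Ups K p s ((1 - θ) • A₀ + θ • A₁)) :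
    0 < p ∧ p ≤ 1 := by
  by_contra hbad
  have hp' : p < 0 ∨ 1 < p := by
    rcases hp.lt_or_gt with hneg | hpos
    · exact .inl hneg
    · exact .inr (not_le.1 fun hle => hbad ⟨hpos, hle⟩)
  have hconv : (2 : ℝ) ^ p < ((2 + 1) ^ p + (2 - 1) ^ p) / 2 := by
    have := Real.rpow_midpoint_lt hp' (by norm_num : (0 : ℝ) < 3) one_pos (by norm_num)
    norm_num at this ⊢
    exact this
  obtain ⟨K, hK, A₀, A₁, h₀, h₁, hlt⟩ :=
    exists_Ups_midpoint_lt hs one_pos one_lt_two hconv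
  have hhalf := hconc K hK A₀ A₁ h₀ h₁ (1 / 2) ⟨by norm_num, by norm_num⟩
  rw [show (1 - 1 / 2 : ℝ) • A₀ + (1 / 2 : ℝ) • A₁ = (1 / 2 : ℝ) • (A₀ + A₁) by
    rw [smul_add]; norm_num] at hhalf
  linarith
end
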